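/- Let n be a positive integer and let G be a pure (2n)-sparse gapset with genus g = 3n+1 and depth q. Then q ≤ 4. -/

import Mathlib

/-- A gapset: a finite set of positive integers such that whenever `z ∈ G`
and `z = x + y` with `x, y` positive, then `x ∈ G` or `y ∈ G`. -/
def IsGapset (G : Finset ℕ) : Prop :=
  0 ∉ G ∧ ∀ z ∈ G, ∀ x y : ℕ, 0 < x → 0 < y → z = x + y → x ∈ G ∨ y ∈ G

/-- The multiplicity of a gapset: the least positive integer not in `G`. -/
noncomputable def mult (G : Finset ℕ) : ℕ := sInf {s : ℕ | 0 < s ∧ s ∉ G}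

/-- `a` and `b` are consecutive elements of `G` (in the natural order). -/
def Consec (G : Finset ℕ) (a b : ℕ) : Prop :=
  a ∈ G ∧ b ∈ G ∧ a < b ∧ ∀ c ∈ G, c ≤ a ∨ b ≤ c

/-- `G` is pure `κ`-sparse: all consecutive differences are at most `κ`
and some consecutive difference equals `κ`. -/
def PureSparse (κ : ℕ) (G : Finset ℕ) : Prop :=
  (∀ a b, Consec G a b → b - a ≤ κ) ∧ (∃ a b, Consec G a b ∧ b - a = κ)

/-- The Frobenius number (largest element) of a gapset. -/
def frob (G : Finset ℕ) : ℕ := G.sup id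

/-- The depth of a gapset: `⌈c/m⌉` where `c = frob G + 1` is the conductor. -/
noncomputable def depth (G : Finset ℕ) : ℕ := (frob G + mult G) / mult G

/-- `x` is a pseudo-Frobenius number of `G`. -/
def PseudoFrob (G : Finset ℕ) (x : ℕ) : Prop :=
  x ∈ G ∧ ∀ s : ℕ, 0 < s → s ∉ G → x + s ∉ G

/-!
The gap of size `2n` between consecutive elements `a < b` forces every `0 < i < 2n` into `G`:
`b = i + (b - i)` and `b - i` lies strictly between `a` and `b`. Hence the multiplicity is at
least `2n`. On the other hand the Frobenius number `f` of any gapset is at most `2g - 1`,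
since for each `0 < x < f` outside `G` the complement `f - x` lies in `G`. So
`f ≤ 6n + 1 < 8n ≤ 4 m`, which is `depth G ≤ 4`.
-/

theorem le_frob_of_mem {G : Finset ℕ} {x : ℕ} (hx : x ∈ G) : x ≤ frob G :=
  Finset.le_sup (f := id) hx

theorem frob_mem {G : Finset ℕ} (hG : G.Nonempty) : frob G ∈ G := by
  obtain ⟨x, hx, hsup⟩ := Finset.exists_mem_eq_sup G hG id
  rwa [frob, hsup]

theorem mult_pos_and_not_mem (G : Finset ℕ) : 0 < mult G ∧ mult G ∉ G :=
  Nat.sInf_mem (s := {s | 0 < s ∧ s ∉ G})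
    ⟨frob G + 1, Nat.succ_pos _, fun h => by have := le_frob_of_mem h; omega⟩

theorem depth_le_iff (G : Finset ℕ) (k : ℕ) : depth G ≤ k ↔ frob G < k * mult G := by
  have hm := (mult_pos_and_not_mem G).1
  rw [depth, Nat.add_div_right _ hm, Nat.succ_le_iff, Nat.div_lt_iff_lt_mul hm]

namespace IsGapset

variable {G : Finset ℕ} (hG : IsGapset G)
include hG

theorem mem_of_lt_consec_sub {a b i : ℕ} (hab : Consec G a b) (hi : 0 < i) (hib : i < b - a) :
    i ∈ G := by
  obtain ⟨-, hb, -, hcons⟩ := hab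
  have hbi : b - i ∉ G := fun h => by rcases hcons _ h with h | h <;> omega
  exact (hG.2 b hb i (b - i) hi (by omega) (by omega)).resolve_right hbi

theorem sub_le_mult_of_consec {a b : ℕ} (hab : Consec G a b) : b - a ≤ mult G := by
  obtain ⟨hm, hmG⟩ := mult_pos_and_not_mem G
  by_contra! h
  exact hmG (hG.mem_of_lt_consec_sub hab hm h)

theorem frob_lt_two_mul_card (hne : G.Nonempty) : frob G < 2 * G.card := by
  have hf : frob G ∈ G := frob_mem hne
  generalize frob G = f at hf ⊢
  have hcover : Finset.Ioo 0 f ⊆ G.erase f ∪ (G.erase f).image (f - ·) := by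
    intro x hx
    rw [Finset.mem_Ioo] at hx
    by_cases hxG : x ∈ G
    · exact Finset.mem_union_left _ (Finset.mem_erase.mpr ⟨hx.2.ne, hxG⟩)
    · have hfx : f - x ∈ G :=
        (hG.2 f hf x (f - x) hx.1 (by omega) (by omega)).resolve_left hxG
      exact Finset.mem_union_right _
        (Finset.mem_image.mpr ⟨f - x, Finset.mem_erase.mpr ⟨by omega, hfx⟩, by omega⟩)
  have hcard := (Finset.card_le_card hcover).trans (Finset.card_union_le _ _)
  have himage := Finset.card_image_le (s := G.erase f) (f := (f - ·))
  rw [Nat.card_Ioo] at hcard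
  rw [Finset.card_erase_of_mem hf] at hcard himage
  have := Finset.card_pos.mpr hne
  omega

end IsGapset

theorem stmt10 (n : ℕ) (hn : 0 < n) (G : Finset ℕ) (hG : IsGapset G)
    (hps : PureSparse (2 * n) G) (hcard : G.card = 3 * n + 1) :
    depth G ≤ 4 := by
  obtain ⟨a, b, hab, hgap⟩ := hps.2
  have hmult : 2 * n ≤ mult G := hgap ▸ hG.sub_le_mult_of_consec hab
  have hfrob : frob G < 2 * G.card := hG.frob_lt_two_mul_card ⟨a, hab.1⟩
  rw [depth_le_iff]
  omega
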